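/- Let p be an odd prime, let a, b ∈ ℂ_p with R = |a − b|_p > 0, let Φ be an interlocked family of path sequences, and let f be holomorphic on 𝒜(a,b) with |f(x)|_p ≤ M for all x ∈ 𝒜(a,b). If the line integral ∫_{𝒜(a,b),Φ} f(x) dx exists, then |∫_{𝒜(a,b),Φ} f(x) dx|_p ≤ M·R. -/

import Mathlib

/-!
Throughout, `K` plays the role of `ℂ_p`, the completion of an algebraic closure of `ℚ_p`:
it is a complete, algebraically closed, nonarchimedean (ultrametric) normed field equipped
with an isometric `ℚ_[p]`-algebra structure (hypothesis `hKext`).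
-/

open scoped BigOperators

/-- A *path sequence*: a function defined (positive-valued and strictly increasing)
for `k ≥ k₀`, for some positive integer `k₀`. -/
structure PathSeq where
  toFun : ℕ → ℕ
  k₀ : ℕ
  k₀_pos : 0 < k₀
  pos : ∀ k, k₀ ≤ k → 0 < toFun k
  mono : ∀ k l, k₀ ≤ k → k < l → toFun k < toFun l

/-- The Riemann-type sum `A_{f,φ}(k)` (with `N = φ(k)`):
`p^{-N} ∑_ζ (b - a) ζ · f (a + (b - a) ζ)`, `ζ` ranging over the `p^N`-th roots of unity. -/
noncomputable def Asum (p : ℕ) (K : Type*) [NormedField K] (a b : K) (f : K → K) (N : ℕ) : K :=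
  ((p : K) ^ N)⁻¹ *
    ∑ ζ ∈ Polynomial.nthRootsFinset (p ^ N) (1 : K), (b - a) * ζ * f (a + (b - a) * ζ)

/-- `ψ` is, for `k ≥ k₀`, a subsequence of the path sequence `φ`. -/
def SubseqFrom (ψ φ : PathSeq) (k₀ : ℕ) : Prop :=
  ∃ σ : ℕ → ℕ, (∀ k l, k₀ ≤ k → k < l → σ k < σ l) ∧
    ∀ k, k₀ ≤ k → φ.k₀ ≤ σ k ∧ ψ.toFun k = φ.toFun (σ k)

/-- An *interlocked* family of path sequences: nonempty, and any two members have a common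
member-subsequence. -/
def Interlocked (Φ : Set PathSeq) : Prop :=
  Φ.Nonempty ∧ ∀ φ₁ ∈ Φ, ∀ φ₂ ∈ Φ, ∃ φ₃ ∈ Φ, ∃ k₀ : ℕ, 0 < k₀ ∧
    SubseqFrom φ₃ φ₁ k₀ ∧ SubseqFrom φ₃ φ₂ k₀

/-- `∫_{𝒜(a,b),Φ} f(x) dx = L`: for every `ε > 0` there are `φ ∈ Φ` and `M` such that
`|A_{f,φ}(k) - L| < ε` for all `k > M` (in the domain of `φ`). -/
def HasIntegral (p : ℕ) (K : Type*) [NormedField K] (a b : K) (f : K → K)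
    (Φ : Set PathSeq) (L : K) : Prop :=
  ∀ ε : ℝ, 0 < ε → ∃ φ ∈ Φ, ∃ M : ℕ, φ.k₀ ≤ M ∧
    ∀ k, M < k → ‖Asum p K a b f (φ.toFun k) - L‖ < ε

/-- `f` is holomorphic on `S`: its values on `S` are given by the single power series with
coefficients `c`, centered at `b`, convergent on `S`. -/
def HolomorphicOn' (K : Type*) [NormedField K] (c : ℕ → K) (b : K) (f : K → K)
    (S : Set K) : Prop :=
  ∀ x ∈ S, Summable (fun n : ℕ => c n * (x - b) ^ n) ∧ f x = ∑' n : ℕ, c n * (x - b) ^ n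

/-- The arc `𝒜(a,b)`: the open disc of radius `R = |a - b|` around `b`. -/
def arc (K : Type*) [NormedField K] (a b : K) : Set K := {x : K | ‖x - b‖ < ‖a - b‖}

/-- `c` are controlled coefficients of order `β` (for the radius `R`). -/
def Controlled (K : Type*) [NormedField K] (c : ℕ → K) (R β : ℝ) : Prop :=
  ∃ M n₀ : ℝ, 0 < n₀ ∧ ∀ n : ℕ, n₀ < (n : ℝ) → ‖c n‖ * R ^ n < M * (n : ℝ) ^ β

/-- The interlocked family `Φ_α = {k ↦ α + λ k : λ ∈ ℤ⁺}`. -/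
def PhiAlpha (α : ℕ) : Set PathSeq :=
  {φ : PathSeq | ∃ lam : ℕ, 0 < lam ∧ ∀ k : ℕ, φ.toFun k = α + lam * k}

/-!
Write `f = ∑ cₙ (x - b)ⁿ` on the arc and `R = ‖a - b‖`.

First, the ultrametric Cauchy estimate `‖cₙ‖ Rⁿ ≤ M`. Averaging `ω^{-n} f(b + tω)` over the
`q`-th roots of unity `ω` isolates the terms of index `m ≡ n (mod q)`; when `‖q‖ = 1` the average
is still bounded by `M`, and since one of any two consecutive integers has norm `1`, `q` can be
taken so large that the other isolated terms are negligible. This gives `‖cₙ tⁿ‖ ≤ M` for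
`‖t‖ < R`, and roots of `p` in the algebraically closed field provide `‖t‖` arbitrarily close to
`R`.

Second, every Riemann sum satisfies `‖A_{f,φ}(k)‖ ≤ M R`. A `p`-power root of unity `ζ` has
`‖ζ - 1‖ < 1`, so the sample points `a + (b - a)ζ` lie in the arc, and expanding `f` around `b`
gives `A = ∑ₖ cₖ (b - a)^{k+1} · p^{-N} ∑_ζ ζ (ζ - 1)^k`, where the inner average over the
`p^N`-th roots of unity is an integer. The integral, a limit of such sums, obeys the same bound.
-/

open Polynomial Finset Filter

section RootsOfUnity

variable {K : Type*} [Field K] {n : ℕ} {ζ : K}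

theorem IsPrimitiveRoot.sum_nthRootsFinset_one {M : Type*} [AddCommMonoid M]
    (hζ : IsPrimitiveRoot ζ n) (g : K → M) :
    ∑ x ∈ nthRootsFinset n (1 : K), g x = ∑ i ∈ range n, g (ζ ^ i) := by
  classical
  rw [nthRootsFinset_def, ← Multiset.toFinset_eq hζ.nthRoots_one_nodup, Finset.sum_mk,
    hζ.nthRoots_eq (one_pow n), Multiset.map_map]
  simp [Finset.sum, Finset.range]

theorem IsPrimitiveRoot.sum_nthRootsFinset_pow (hζ : IsPrimitiveRoot ζ n) (k : ℕ) :
    ∑ x ∈ nthRootsFinset n (1 : K), x ^ k = if n ∣ k then (n : K) else 0 := by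
  rw [hζ.sum_nthRootsFinset_one]
  simp_rw [← pow_mul, mul_comm _ k, pow_mul]
  split_ifs with hk
  · simp [(hζ.pow_eq_one_iff_dvd k).2 hk]
  · have hne : ζ ^ k ≠ 1 := mt (hζ.pow_eq_one_iff_dvd k).1 hk
    rw [geom_sum_eq hne, ← pow_mul, mul_comm, pow_mul, hζ.pow_eq_one, one_pow, sub_self,
      zero_div]

theorem IsPrimitiveRoot.hasSum_ite_dvd [TopologicalSpace K] [IsTopologicalRing K] [NeZero n]
    (hζ : IsPrimitiveRoot ζ n) {c : ℕ → K} {F : K → K}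
    (hF : ∀ ω ∈ nthRootsFinset n (1 : K), HasSum (fun m ↦ c m * ω ^ m) (F ω)) (j : ℕ) :
    HasSum (fun m ↦ if n ∣ m + j then c m else 0)
      ((n : K)⁻¹ * ∑ ω ∈ nthRootsFinset n (1 : K), ω ^ j * F ω) := by
  have : NeZero (n : K) := hζ.neZero'
  refine (hasSum_sum fun ω hω ↦ (hF ω hω).mul_left (ω ^ j)).mul_left (n : K)⁻¹ |>.congr_fun ?_
  intro m
  have hterm : ∀ ω : K, ω ^ j * (c m * ω ^ m) = c m * ω ^ (m + j) := fun ω ↦ by ring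
  simp_rw [hterm, ← Finset.mul_sum, hζ.sum_nthRootsFinset_pow]
  split_ifs
  · rw [mul_left_comm, inv_mul_cancel₀ (NeZero.ne _), mul_one]
  · simp

end RootsOfUnity

theorem Nat.le_of_dvd_add_sub {q m n : ℕ} (hnq : n < q) (hmn : m ≠ n) (h : q ∣ m + (q - n)) :
    q ≤ m := by
  by_contra! hmq
  obtain ⟨k, hk⟩ := h
  have hk2 : k < 2 := Nat.lt_of_mul_lt_mul_left (a := q) (by omega)
  interval_cases k <;> omega

theorem IsUltrametricDist.norm_le_max_of_hasSum {E ι : Type*} [NormedAddCommGroup E]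
    [IsUltrametricDist E] [DecidableEq ι] {g : ι → E} {s : E} (hg : HasSum g s) (i : ι) {δ : ℝ}
    (hδ : 0 ≤ δ) (h : ∀ j ≠ i, ‖g j‖ ≤ δ) : ‖g i‖ ≤ max ‖s‖ δ := by
  have hrest : ‖s - g i‖ ≤ δ := by
    rw [sub_eq_neg_add, ← zero_sub, ← (hg.update i 0).tsum_eq]
    refine IsUltrametricDist.norm_tsum_le_of_forall_le_of_nonneg hδ fun j ↦ ?_
    rcases eq_or_ne j i with rfl | hj
    · simpa using hδ
    · simpa [hj] using h j hj
  calc ‖g i‖ = ‖s + -(s - g i)‖ := by rw [neg_sub, add_sub_cancel]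
    _ ≤ max ‖s‖ ‖s - g i‖ := by
      simpa only [norm_neg] using IsUltrametricDist.norm_add_le_max s (-(s - g i))
    _ ≤ max ‖s‖ δ := max_le_max le_rfl hrest

section NormedField

variable {K : Type*} [NormedField K]

theorem norm_eq_one_of_mem_nthRootsFinset {n : ℕ} {ω : K} (hω : ω ∈ nthRootsFinset n (1 : K)) :
    ‖ω‖ = 1 := by
  have hn : 0 < n := Nat.pos_of_ne_zero fun h ↦ by simp [h] at hω
  exact (isOfFinOrder_iff_pow_eq_one.2 ⟨n, hn, (mem_nthRootsFinset hn 1).1 hω⟩).norm_eq_one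

theorem self_mem_arc {a b : K} (hR : 0 < ‖a - b‖) : b ∈ arc K a b := by
  simpa [arc] using hR

theorem HasIntegral.norm_le {p : ℕ} {a b : K} {f : K → K} {Φ : Set PathSeq} {L : K} {B : ℝ}
    (hL : HasIntegral p K a b f Φ L) (hB : ∀ N, ‖Asum p K a b f N‖ ≤ B) : ‖L‖ ≤ B := by
  refine le_of_forall_pos_le_add fun ε hε ↦ ?_
  obtain ⟨φ, -, k₀, -, hk⟩ := hL ε hε
  set A := Asum p K a b f (φ.toFun (k₀ + 1))
  calc ‖L‖ ≤ ‖A‖ + ‖A - L‖ := by simpa using norm_sub_le A (A - L)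
    _ ≤ B + ε := add_le_add (hB _) (hk _ k₀.lt_succ_self).le

section AlgClosed

variable [IsAlgClosed K] {u : K}

theorem exists_norm_lt_one_lt_norm_pow (hu0 : 0 < ‖u‖) (hu1 : ‖u‖ < 1) {θ : ℝ} (hθ : θ < 1)
    (n : ℕ) : ∃ s : K, ‖s‖ < 1 ∧ θ < ‖s‖ ^ n := by
  rcases lt_or_ge θ 0 with hθ0 | hθ0
  · exact ⟨0, by simp, hθ0.trans_le (by positivity)⟩
  obtain ⟨m, hm⟩ := exists_pow_lt_of_lt_one (pow_pos hu0 n) hθ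
  have hm0 : m ≠ 0 := by
    rintro rfl
    exact (pow_le_one₀ hu0.le hu1.le).not_gt (by simpa using hm)
  obtain ⟨s, rfl⟩ := IsAlgClosed.exists_pow_nat_eq u (Nat.pos_of_ne_zero hm0)
  rw [norm_pow] at hu1 hm
  refine ⟨s, (pow_lt_one_iff_of_nonneg (norm_nonneg s) hm0).1 hu1, ?_⟩
  rw [← pow_mul, mul_comm, pow_mul] at hm
  exact lt_of_pow_lt_pow_left₀ m (by positivity) hm

theorem le_of_forall_norm_lt_one_mul_pow_le (hu0 : 0 < ‖u‖) (hu1 : ‖u‖ < 1) {X M : ℝ}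
    (hM : 0 ≤ M) (n : ℕ) (h : ∀ s : K, ‖s‖ < 1 → X * ‖s‖ ^ n ≤ M) : X ≤ M := by
  by_contra! hMX
  have hX : 0 < X := hM.trans_lt hMX
  obtain ⟨s, hs1, hs⟩ := exists_norm_lt_one_lt_norm_pow hu0 hu1 ((div_lt_one hX).2 hMX) n
  have := h s hs1
  rw [div_lt_iff₀ hX] at hs
  linarith

end AlgClosed

section Ultrametric

variable [IsUltrametricDist K]

theorem IsUltrametricDist.exists_norm_natCast_eq_one_gt (Q : ℕ) :
    ∃ q, Q < q ∧ ‖(q : K)‖ = 1 := by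
  have h := IsUltrametricDist.norm_add_le_max ((Q + 2 : ℕ) : K) (-((Q + 1 : ℕ) : K))
  rw [norm_neg, ← sub_eq_add_neg, Nat.cast_add, Nat.cast_add, add_sub_add_left_eq_sub] at h
  norm_num at h
  rcases h with h | h
  · exact ⟨Q + 2, by omega, le_antisymm (norm_natCast_le_one K _) (by exact_mod_cast h)⟩
  · exact ⟨Q + 1, by omega, le_antisymm (norm_natCast_le_one K _) (by exact_mod_cast h)⟩

theorem IsUltrametricDist.norm_natCast_le_of_dvd {p m : ℕ} (h : p ∣ m) :
    ‖(m : K)‖ ≤ ‖(p : K)‖ := by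
  obtain ⟨t, rfl⟩ := h
  rw [Nat.cast_mul, norm_mul]
  exact mul_le_of_le_one_right (norm_nonneg _) (norm_natCast_le_one K t)

theorem IsUltrametricDist.norm_sub_one_lt_one_of_pow_eq_one {p : ℕ} (hp : p.Prime)
    (hpK : ‖(p : K)‖ < 1) {N : ℕ} {ζ : K} (hζ : ζ ^ p ^ N = 1) : ‖ζ - 1‖ < 1 := by
  have hζ1 : ‖ζ‖ = 1 :=
    (isOfFinOrder_iff_pow_eq_one.2 ⟨_, pow_pos hp.pos N, hζ⟩).norm_eq_one
  set x := ζ - 1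
  have hx : ‖x‖ ≤ 1 := by
    simpa [x, sub_eq_add_neg, hζ1] using norm_add_le_max ζ (-1)
  by_contra! hx1
  replace hx : ‖x‖ = 1 := le_antisymm hx hx1
  obtain ⟨m, hm⟩ : ∃ m, p ^ N = m + 1 := Nat.exists_eq_add_one.2 (pow_pos hp.pos N)
  -- `p` divides every binomial coefficient of `(x + 1) ^ p ^ N` except the outer two
  set mid := ∑ k ∈ range m, x ^ (k + 1) * ((m + 1).choose (k + 1) : K)
  have hexpand : x ^ (m + 1) = -mid := by
    have h := add_pow x 1 (m + 1)
    rw [sub_add_cancel, ← hm, hζ, hm, sum_range_succ, sum_range_succ'] at h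
    simp only [one_pow, mul_one, Nat.choose_self, Nat.choose_zero_right, pow_zero,
      Nat.cast_one] at h
    linear_combination -h
  have hmid : ‖mid‖ ≤ ‖(p : K)‖ := by
    refine norm_sum_le_of_forall_le_of_nonneg (norm_nonneg _) fun k hk ↦ ?_
    have hk : k < m := mem_range.1 hk
    rw [norm_mul, norm_pow, hx, one_pow, one_mul]
    exact norm_natCast_le_of_dvd (hm ▸ hp.dvd_choose_pow (by omega) (by omega))
  have : ‖x ^ (m + 1)‖ = 1 := by rw [norm_pow, hx, one_pow]
  rw [hexpand, norm_neg] at this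
  linarith

theorem IsPrimitiveRoot.norm_inv_mul_sum_aeval_le_one {n : ℕ} [NeZero n] {ζ : K}
    (hζ : IsPrimitiveRoot ζ n) (P : ℤ[X]) :
    ‖(n : K)⁻¹ * ∑ x ∈ nthRootsFinset n (1 : K), aeval x P‖ ≤ 1 := by
  have : NeZero (n : K) := hζ.neZero'
  simp_rw [aeval_eq_sum_range]
  rw [Finset.sum_comm, Finset.mul_sum]
  refine IsUltrametricDist.norm_sum_le_of_forall_le_of_nonneg zero_le_one fun i _ ↦ ?_
  rw [← Finset.smul_sum, hζ.sum_nthRootsFinset_pow]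
  split_ifs
  · rw [zsmul_eq_mul, mul_left_comm, inv_mul_cancel₀ (NeZero.ne _), mul_one]
    exact IsUltrametricDist.norm_intCast_le_one K _
  · simp

variable [IsAlgClosed K]

theorem IsUltrametricDist.norm_mul_pow_le_of_norm_tsum_le {c : ℕ → K} {t : K} {M : ℝ}
    (hsum : ∀ ω : K, ‖ω‖ = 1 → Summable fun m ↦ c m * (t * ω) ^ m)
    (hM : ∀ ω : K, ‖ω‖ = 1 → ‖∑' m, c m * (t * ω) ^ m‖ ≤ M) (n : ℕ) :
    ‖c n * t ^ n‖ ≤ M := by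
  have hM0 : 0 ≤ M := (norm_nonneg _).trans (hM 1 norm_one)
  refine le_of_forall_pos_le_add fun δ hδ ↦ ?_
  obtain ⟨Q, hQ⟩ : ∃ Q, ∀ m ≥ Q, ‖c m * t ^ m‖ ≤ δ := by
    have h := tendsto_zero_iff_norm_tendsto_zero.1 (hsum 1 norm_one).tendsto_atTop_zero
    simp only [mul_one] at h
    exact eventually_atTop.1 (h.eventually (Iic_mem_nhds hδ))
  obtain ⟨q, hq, hq1⟩ := exists_norm_natCast_eq_one_gt (K := K) (Q + n)
  have : NeZero (q : K) := ⟨norm_ne_zero_iff.1 (by simp [hq1])⟩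
  have : NeZero q := ⟨by omega⟩
  obtain ⟨ζ, hζ⟩ := HasEnoughRootsOfUnity.exists_primitiveRoot K q
  have hfilter := hζ.hasSum_ite_dvd (c := fun m ↦ c m * t ^ m)
    (F := fun ω ↦ ∑' m, c m * (t * ω) ^ m) (fun ω hω ↦ by
      simpa only [mul_pow, mul_assoc] using
        (hsum ω (norm_eq_one_of_mem_nthRootsFinset hω)).hasSum) (q - n)
  have hmean : ‖(q : K)⁻¹ * ∑ ω ∈ nthRootsFinset q (1 : K),
      ω ^ (q - n) * ∑' m, c m * (t * ω) ^ m‖ ≤ M := by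
    rw [norm_mul, norm_inv, hq1, inv_one, one_mul]
    refine norm_sum_le_of_forall_le_of_nonneg hM0 fun ω hω ↦ ?_
    have hω := norm_eq_one_of_mem_nthRootsFinset hω
    rw [norm_mul, norm_pow, hω, one_pow, one_mul]
    exact hM ω hω
  have htail : ∀ m ≠ n, ‖if q ∣ m + (q - n) then c m * t ^ m else 0‖ ≤ δ := by
    intro m hmn
    split_ifs with hdvd
    · exact hQ m (by have := Nat.le_of_dvd_add_sub (by omega) hmn hdvd; omega)
    · simpa using hδ.le
  have hn : q ∣ n + (q - n) := by rw [Nat.add_sub_cancel' (by omega)]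
  have := norm_le_max_of_hasSum hfilter n hδ.le htail
  rw [if_pos hn] at this
  exact this.trans (max_le (hmean.trans (le_add_of_nonneg_right hδ.le))
    (le_add_of_nonneg_left hM0))

theorem HolomorphicOn'.norm_coeff_mul_pow_le {u : K} (hu0 : 0 < ‖u‖) (hu1 : ‖u‖ < 1) {a b : K}
    (hR : 0 < ‖a - b‖) {c : ℕ → K} {f : K → K} (hf : HolomorphicOn' K c b f (arc K a b))
    {M : ℝ} (hM : ∀ x ∈ arc K a b, ‖f x‖ ≤ M) (n : ℕ) : ‖c n‖ * ‖a - b‖ ^ n ≤ M := by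
  have hM0 : 0 ≤ M := (norm_nonneg _).trans (hM b (self_mem_arc hR))
  refine le_of_forall_norm_lt_one_mul_pow_le hu0 hu1 hM0 n fun s hs ↦ ?_
  have hmem : ∀ ω : K, ‖ω‖ = 1 → b + (a - b) * s * ω ∈ arc K a b := fun ω hω ↦ by
    simpa [arc, norm_mul, hω] using mul_lt_of_lt_one_right hR hs
  have hsum : ∀ ω : K, ‖ω‖ = 1 → Summable fun m ↦ c m * ((a - b) * s * ω) ^ m :=
    fun ω hω ↦ by simpa using (hf _ (hmem ω hω)).1
  have hbound : ∀ ω : K, ‖ω‖ = 1 → ‖∑' m, c m * ((a - b) * s * ω) ^ m‖ ≤ M :=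
    fun ω hω ↦ by simpa [(hf _ (hmem ω hω)).2] using hM _ (hmem ω hω)
  simpa [norm_mul, mul_pow, mul_assoc] using
    IsUltrametricDist.norm_mul_pow_le_of_norm_tsum_le hsum hbound n

theorem HolomorphicOn'.norm_Asum_le {p : ℕ} (hp : p.Prime) (hp0 : (p : K) ≠ 0)
    (hp1 : ‖(p : K)‖ < 1) {a b : K} (hR : 0 < ‖a - b‖) {c : ℕ → K} {f : K → K}
    (hf : HolomorphicOn' K c b f (arc K a b)) {M : ℝ} (hc : ∀ k, ‖c k‖ * ‖a - b‖ ^ k ≤ M)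
    (N : ℕ) : ‖Asum p K a b f N‖ ≤ M * ‖a - b‖ := by
  have : NeZero (p ^ N) := ⟨pow_ne_zero N hp.ne_zero⟩
  have : NeZero ((p ^ N : ℕ) : K) := ⟨by simpa using pow_ne_zero N hp0⟩
  obtain ⟨ζ₀, hζ₀⟩ := HasEnoughRootsOfUnity.exists_primitiveRoot K (p ^ N)
  have hM0 : 0 ≤ M := (norm_nonneg _).trans (by simpa using hc 0)
  have hsub : ∀ ζ : K, a + (b - a) * ζ - b = (b - a) * (ζ - 1) := fun ζ ↦ by ring
  have hmem : ∀ ζ ∈ nthRootsFinset (p ^ N) (1 : K), a + (b - a) * ζ ∈ arc K a b := by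
    intro ζ hζ
    have hζ1 := IsUltrametricDist.norm_sub_one_lt_one_of_pow_eq_one hp hp1
      ((mem_nthRootsFinset (NeZero.pos _) 1).1 hζ)
    simpa [arc, hsub, norm_mul, norm_sub_rev b a] using mul_lt_of_lt_one_right hR hζ1
  have hexpand : ∀ ζ ∈ nthRootsFinset (p ^ N) (1 : K), HasSum
      (fun k ↦ (b - a) ^ (k + 1) * c k * (ζ * (ζ - 1) ^ k))
      ((b - a) * ζ * f (a + (b - a) * ζ)) := by
    intro ζ hζ
    obtain ⟨hsum, hval⟩ := hf _ (hmem ζ hζ)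
    rw [hsub] at hsum hval
    rw [hval]
    refine (hsum.hasSum.mul_left ((b - a) * ζ)).congr_fun fun k ↦ ?_
    rw [mul_pow]
    ring
  have hA : HasSum (fun k ↦ (b - a) ^ (k + 1) * c k *
      (((p ^ N : ℕ) : K)⁻¹ * ∑ ζ ∈ nthRootsFinset (p ^ N) (1 : K), ζ * (ζ - 1) ^ k))
      (Asum p K a b f N) := by
    rw [Asum, ← Nat.cast_pow]
    refine ((hasSum_sum hexpand).mul_left _).congr_fun fun k ↦ ?_
    rw [Finset.mul_sum, Finset.mul_sum, Finset.mul_sum]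
    exact Finset.sum_congr rfl fun ζ _ ↦ by ring
  rw [← hA.tsum_eq]
  refine IsUltrametricDist.norm_tsum_le_of_forall_le_of_nonneg (by positivity) fun k ↦ ?_
  have havg := hζ₀.norm_inv_mul_sum_aeval_le_one (X * (X - 1) ^ k)
  simp only [map_mul, map_pow, map_sub, aeval_X, map_one] at havg
  rw [norm_mul, norm_mul, norm_pow, norm_sub_rev b a, pow_succ]
  calc ‖a - b‖ ^ k * ‖a - b‖ * ‖c k‖ * _ ≤ ‖a - b‖ ^ k * ‖a - b‖ * ‖c k‖ * 1 := by gcongr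
    _ = ‖c k‖ * ‖a - b‖ ^ k * ‖a - b‖ := by ring
    _ ≤ M * ‖a - b‖ := by gcongr; exact hc k

end Ultrametric

end NormedField

theorem stmt_1_general (p : ℕ) [Fact (Nat.Prime p)]
    (K : Type*) [NormedField K] [IsAlgClosed K] [IsUltrametricDist K]
    [Algebra ℚ_[p] K] (hKext : ∀ q : ℚ_[p], ‖algebraMap ℚ_[p] K q‖ = ‖q‖)
    (a b : K) (hR : 0 < ‖a - b‖) (Φ : Set PathSeq)
    (c : ℕ → K) (f : K → K) (hf : HolomorphicOn' K c b f (arc K a b))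
    (M : ℝ) (hM : ∀ x ∈ arc K a b, ‖f x‖ ≤ M)
    (L : K) (hL : HasIntegral p K a b f Φ L) :
    ‖L‖ ≤ M * ‖a - b‖ := by
  have hp : p.Prime := Fact.out
  have hpK : ‖(p : K)‖ = (p : ℝ)⁻¹ := by
    rw [← map_natCast (algebraMap ℚ_[p] K), hKext, Padic.norm_p]
  have hp0 : 0 < ‖(p : K)‖ := by
    rw [hpK]
    exact inv_pos.2 (Nat.cast_pos.2 hp.pos)
  have hp1 : ‖(p : K)‖ < 1 := by
    rw [hpK]
    exact inv_lt_one_of_one_lt₀ (Nat.one_lt_cast.2 hp.one_lt)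
  have hc := HolomorphicOn'.norm_coeff_mul_pow_le hp0 hp1 hR hf hM
  exact hL.norm_le (HolomorphicOn'.norm_Asum_le hp (norm_pos_iff.1 hp0) hp1 hR hf hc)

/-- If `f` is holomorphic on `𝒜(a,b)`, bounded by `M` there, and its line
integral with respect to an interlocked family `Φ` exists, then the integral has norm
at most `M · R`. -/
theorem stmt_1 (p : ℕ) [Fact (Nat.Prime p)] (hp2 : p ≠ 2)
    (K : Type*) [NormedField K] [CompleteSpace K] [IsAlgClosed K] [IsUltrametricDist K]
    [Algebra ℚ_[p] K] (hKext : ∀ q : ℚ_[p], ‖algebraMap ℚ_[p] K q‖ = ‖q‖)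
    (a b : K) (hR : 0 < ‖a - b‖) (Φ : Set PathSeq) (hΦ : Interlocked Φ)
    (c : ℕ → K) (f : K → K) (hf : HolomorphicOn' K c b f (arc K a b))
    (M : ℝ) (hM : ∀ x ∈ arc K a b, ‖f x‖ ≤ M)
    (L : K) (hL : HasIntegral p K a b f Φ L) :
    ‖L‖ ≤ M * ‖a - b‖ :=
  stmt_1_general p K hKext a b hR Φ c f hf M hM L hL
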